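/- arXiv:2006.02966 — 2 statements merged into one kernel-verified Lean document; each statement's English description precedes it below -/
import Mathlib

section
/- Let k ≥ n ≥ 3 and let Z_n(k) denote the set of all positive integers whose n-decomposition contains the summand F_{n,k}. Then Z_n(k) = { j + F_{n,k} + Σ_{i=1}^n F_{n,k+i}·N_{a_i}(m) : 0 ≤ j ≤ F_{n,k-(n-1)} - 1 and m ≥ 0 }. -/
/-!
A decomposition containing `F k` splits as `L₁ ++ k :: (k + L₂)`. By the greedy algorithm the
sums over admissible `L₁` (all indices at most `k - n`) are exactly the numbers below
`F (k - n + 1)`, while `L₂` is an arbitrary decomposition, of `m` say. The first `m` letters of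
`S_∞` are the strings `S_c`, `c ∈ L₂`, concatenated from the largest index down, and weighting the
letter `a_i` by `F (k + i)` gives `S_c` the total weight `F (k + c)`, because both sides satisfy
the recursion of `F` with the same initial values.
-/

open Finset (Icc)

def GenFibRec (n : ℕ) (u : ℕ → ℕ) : Prop :=
  ∀ m, n ≤ m → u (m + 1) = u m + u (m + 1 - n)

structure IsGenFibonacci (n : ℕ) (F : ℕ → ℕ) : Prop where
  eq_one : ∀ i, 1 ≤ i → i ≤ n → F i = 1
  succ : GenFibRec n F

structure IsNString (n : ℕ) (S : ℕ → List ℕ) : Prop where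
  eq_singleton : ∀ i, 1 ≤ i → i ≤ n → S i = [i]
  succ : ∀ m, n ≤ m → S (m + 1) = S m ++ S (m + 1 - n)

def IsLimitWord (n : ℕ) (S : ℕ → List ℕ) (W : ℕ → ℕ) : Prop :=
  ∀ m, n ≤ m → S m = (List.range (S m).length).map W

def IsDecomposition (n : ℕ) (L : List ℕ) : Prop :=
  (∀ c ∈ L, n ≤ c) ∧ L.Pairwise (fun a b => a + n ≤ b)

variable {n : ℕ}

namespace GenFibRec

theorem eqOn_Ici {u v : ℕ → ℕ} (hn : 0 < n) (hu : GenFibRec n u) (hv : GenFibRec n v)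
    (h : Set.EqOn u v (Set.Icc 1 n)) : Set.EqOn u v (Set.Ici 1) := by
  intro m hm
  induction m using Nat.strong_induction_on with
  | _ m ih =>
    obtain hmn | hmn := le_or_gt m n
    · exact h ⟨hm, hmn⟩
    obtain ⟨m, rfl⟩ : ∃ m', m = m' + 1 := ⟨m - 1, by omega⟩
    rw [hu m (by omega), hv m (by omega), ih m (by omega) (Set.mem_Ici.2 (by omega)),
      ih (m + 1 - n) (by omega) (Set.mem_Ici.2 (by omega))]

theorem comp_add_left {u : ℕ → ℕ} (hu : GenFibRec n u) (k : ℕ) :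
    GenFibRec n fun m => u (k + m) := by
  intro m hm
  simp only [← add_assoc, hu (k + m) (by omega), show k + m + 1 - n = k + (m + 1 - n) by omega]

end GenFibRec

theorem isDecomposition_iff_isChain {L : List ℕ} :
    IsDecomposition n L ↔ (∀ c ∈ L, n ≤ c) ∧ L.IsChain (fun a b => a + n ≤ b) := by
  have : Trans (fun a b : ℕ => a + n ≤ b) (fun a b => a + n ≤ b) (fun a b => a + n ≤ b) :=
    ⟨fun h₁ h₂ => by omega⟩
  rw [List.isChain_iff_pairwise]
  rfl

theorem isDecomposition_append_cons_map_add {L₁ L₂ : List ℕ} {k : ℕ} :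
    IsDecomposition n (L₁ ++ k :: L₂.map (k + ·)) ↔
      IsDecomposition n L₁ ∧ n ≤ k ∧ (∀ a ∈ L₁, a + n ≤ k) ∧ IsDecomposition n L₂ := by
  simp only [IsDecomposition, List.mem_append, List.mem_cons, List.mem_map, or_imp,
    forall_exists_index, and_imp, forall_and, forall_eq, forall_apply_eq_imp_iff₂,
    List.pairwise_append, List.pairwise_cons, add_le_add_iff_left, List.pairwise_map, add_assoc]
  constructor
  · rintro ⟨⟨h₁, hk, -⟩, p₁, ⟨h₂, p₂⟩, hk₁, -⟩
    exact ⟨⟨h₁, p₁⟩, hk, hk₁, h₂, p₂⟩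
  · rintro ⟨⟨h₁, p₁⟩, hk, hk₁, h₂, p₂⟩
    exact ⟨⟨h₁, hk, fun a _ => by omega⟩, p₁, ⟨h₂, p₂⟩, hk₁,
      fun x hx a _ => by have := hk₁ x hx; omega⟩

theorem isDecomposition_append_singleton {L : List ℕ} {c : ℕ} :
    IsDecomposition n (L ++ [c]) ↔ IsDecomposition n L ∧ n ≤ c ∧ ∀ a ∈ L, a + n ≤ c := by
  simpa [IsDecomposition] using isDecomposition_append_cons_map_add (n := n) (L₁ := L) (L₂ := [])

theorem IsDecomposition.exists_eq_append_cons_map_add {L : List ℕ} {k : ℕ}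
    (hL : IsDecomposition n L) (hk : k ∈ L) :
    ∃ L₁ L₂ : List ℕ, L = L₁ ++ k :: L₂.map (k + ·) := by
  obtain ⟨L₁, L₂, rfl⟩ := List.append_of_mem hk
  have hle : ∀ c ∈ L₂, k ≤ c := fun c hc => by
    have := (List.pairwise_cons.1 (List.pairwise_append.1 hL.2).2.1).1 c hc
    omega
  refine ⟨L₁, L₂.map (· - k), ?_⟩
  rw [List.map_map, List.map_congr_left (g := id) fun c hc => by grind, List.map_id]

namespace IsGenFibonacci

variable {F : ℕ → ℕ}

theorem pos (hF : IsGenFibonacci n F) (hn : 0 < n) : ∀ {m}, 0 < m → 0 < F m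
  | m + 1, _ => by
    rcases Nat.lt_or_ge m n with h | h
    · rw [hF.eq_one (m + 1) (by omega) h]
      exact one_pos
    · rw [hF.succ m h]
      have := hF.pos hn (m := m) (by omega)
      omega

theorem monotoneOn (hF : IsGenFibonacci n F) : MonotoneOn F (Set.Ici 1) := by
  refine monotoneOn_nat_Ici_of_le_succ fun m hm => ?_
  rcases Nat.lt_or_ge m n with h | h
  · rw [hF.eq_one m hm h.le, hF.eq_one (m + 1) (by omega) h]
  · rw [hF.succ m h]
    exact Nat.le_add_right _ _

theorem lt_apply_add (hF : IsGenFibonacci n F) (hn : 0 < n) : ∀ m, m < F (m + n)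
  | 0 => by
    rw [zero_add, hF.eq_one n hn le_rfl]
    exact one_pos
  | m + 1 => by
    rw [add_right_comm, hF.succ (m + n) (by omega), add_right_comm, Nat.add_sub_cancel]
    have := hF.lt_apply_add hn m
    have := hF.pos hn (m := m + 1) (by omega)
    omega

theorem sum_lt (hF : IsGenFibonacci n F) (hn : 0 < n) {L : List ℕ} (hL : IsDecomposition n L)
    {M : ℕ} (hM : ∀ c ∈ L, c ≤ M) : (L.map F).sum < F (M + 1) := by
  induction L using List.reverseRecOn generalizing M with
  | nil => simpa using hF.pos hn M.succ_pos
  | append_singleton L c ih =>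
    obtain ⟨hL, hc, hLc⟩ := isDecomposition_append_singleton.1 hL
    have hsum := ih hL (M := c - n) fun a ha => by have := hLc a ha; omega
    have hcM : F (c + 1) ≤ F (M + 1) :=
      hF.monotoneOn (by simp) (by simp) (by simpa using hM c (by simp))
    rw [hF.succ c hc, show c + 1 - n = c - n + 1 by omega] at hcM
    simp only [List.map_append, List.sum_append, List.map_singleton, List.sum_singleton]
    omega

theorem exists_isDecomposition_le (hF : IsGenFibonacci n F) (hn : 0 < n) {M x : ℕ}
    (hx : x < F (M + 1)) :
    ∃ L, IsDecomposition n L ∧ (∀ c ∈ L, c ≤ M) ∧ (L.map F).sum = x := by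
  induction M using Nat.strong_induction_on generalizing x with
  | _ M ih =>
    rcases Nat.lt_or_ge M n with hM | hM
    · rw [hF.eq_one (M + 1) (by omega) hM, Nat.lt_one_iff] at hx
      exact ⟨[], by simp [IsDecomposition], by simp, by simp [hx]⟩
    rw [hF.succ M hM] at hx
    by_cases hxM : x < F M
    · obtain ⟨L, hL, hLM, hsum⟩ := ih (M - 1) (by omega) (x := x)
        (by rwa [Nat.sub_add_cancel (by omega)])
      exact ⟨L, hL, fun c hc => by have := hLM c hc; omega, hsum⟩
    · obtain ⟨L, hL, hLM, hsum⟩ := ih (M - n) (by omega) (x := x - F M)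
        (by rw [show M - n + 1 = M + 1 - n by omega]; omega)
      refine ⟨L ++ [M], isDecomposition_append_singleton.2
        ⟨hL, hM, fun a ha => by have := hLM a ha; omega⟩, ?_, ?_⟩
      · simp only [List.mem_append, List.mem_singleton]
        rintro c (hc | rfl)
        · have := hLM c hc
          omega
        · rfl
      · simp only [List.map_append, List.sum_append, List.map_singleton, List.sum_singleton, hsum]
        omega

theorem exists_isDecomposition (hF : IsGenFibonacci n F) (hn : 0 < n) (x : ℕ) :
    ∃ L, IsDecomposition n L ∧ (L.map F).sum = x := by
  obtain ⟨L, hL, -, hsum⟩ := hF.exists_isDecomposition_le hn (M := x + n - 1)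
    (by rw [Nat.sub_add_cancel (by omega)]; exact hF.lt_apply_add hn x)
  exact ⟨L, hL, hsum⟩

end IsGenFibonacci

namespace IsNString

variable {S : ℕ → List ℕ} {F : ℕ → ℕ}

theorem genFibRec_sum_mul_count (hS : IsNString n S) (w : ℕ → ℕ) :
    GenFibRec n fun m => ∑ i ∈ Icc 1 n, w i * (S m).count i := by
  intro m hm
  simp only [hS.succ m hm, List.count_append, mul_add, Finset.sum_add_distrib]

theorem length_eq (hS : IsNString n S) (hF : IsGenFibonacci n F) (hn : 0 < n) {m : ℕ}
    (hm : 0 < m) : (S m).length = F m := by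
  refine GenFibRec.eqOn_Ici (u := fun m => (S m).length) hn (fun m hm => ?_) hF.succ
    (fun i ⟨hi, hin⟩ => ?_) hm
  · simp only [hS.succ m hm, List.length_append]
  · simp [hS.eq_singleton i hi hin, hF.eq_one i hi hin]

theorem sum_mul_count_eq (hS : IsNString n S) (hF : IsGenFibonacci n F) (hn : 0 < n) (k : ℕ)
    {m : ℕ} (hm : 0 < m) : ∑ i ∈ Icc 1 n, F (k + i) * (S m).count i = F (k + m) := by
  refine GenFibRec.eqOn_Ici hn (hS.genFibRec_sum_mul_count _) (hF.succ.comp_add_left k)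
    (fun i ⟨hi, hin⟩ => ?_) hm
  dsimp only
  rw [hS.eq_singleton i hi hin, Finset.sum_eq_single_of_mem i (by simp [hi, hin])]
  · simp
  · intro j _ hji
    simp [hji.symm]

theorem sum_mul_count_flatten (hS : IsNString n S) (hF : IsGenFibonacci n F) (hn : 0 < n)
    (k : ℕ) {L : List ℕ} (hL : ∀ c ∈ L, 0 < c) :
    ∑ i ∈ Icc 1 n, F (k + i) * ((L.map S).flatten).count i = (L.map fun c => F (k + c)).sum := by
  induction L with
  | nil => simp
  | cons c L ih =>
    simp only [List.map_cons, List.flatten_cons, List.count_append, mul_add,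
      Finset.sum_add_distrib, List.sum_cons]
    rw [hS.sum_mul_count_eq hF hn k (hL c (by simp)), ih fun a ha => hL a (by simp [ha])]

end IsNString

namespace IsLimitWord

variable {S : ℕ → List ℕ} {F W : ℕ → ℕ}

theorem map_range_eq (hW : IsLimitWord n S W) (hS : IsNString n S) (hF : IsGenFibonacci n F)
    (hn : 0 < n) {m : ℕ} (hm : n ≤ m) : (List.range (F m)).map W = S m := by
  rw [← hS.length_eq hF hn (by omega), ← hW m hm]

/-- `S (c + 1) = S c ++ S (c + 1 - n)` is itself a prefix of `W`. -/
theorem apply_add (hW : IsLimitWord n S W) (hS : IsNString n S) (hF : IsGenFibonacci n F)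
    (hn : 0 < n) {c t : ℕ} (hc : n ≤ c + 1 - n) (ht : t < F (c + 1 - n)) :
    W (F c + t) = W t := by
  have h := hS.succ c (by omega)
  rw [← hW.map_range_eq hS hF hn (by omega), ← hW.map_range_eq hS hF hn (by omega),
    ← hW.map_range_eq hS hF hn hc, hF.succ c (by omega), List.range_add, List.map_append,
    List.map_map] at h
  simpa [ht] using congrArg (·[t]?) (List.append_cancel_left h)

theorem map_range_sum (hW : IsLimitWord n S W) (hS : IsNString n S) (hF : IsGenFibonacci n F)
    (hn : 0 < n) {L : List ℕ} (hL : IsDecomposition n L) :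
    (List.range (L.map F).sum).map W = (L.reverse.map S).flatten := by
  induction L using List.reverseRecOn with
  | nil => simp
  | append_singleton L c ih =>
    obtain ⟨hL, hc, hLc⟩ := isDecomposition_append_singleton.1 hL
    rw [List.map_append, List.sum_append, List.map_singleton, List.sum_singleton, add_comm,
      List.range_add, List.map_append, List.map_map, hW.map_range_eq hS hF hn hc,
      List.reverse_append, List.reverse_singleton, List.singleton_append, List.map_cons,
      List.flatten_cons, ← ih hL]
    congr 1
    refine List.map_congr_left fun t ht => hW.apply_add hS hF hn ?_ ?_
    · obtain ⟨a, ha⟩ := L.exists_mem_of_ne_nil (by rintro rfl; simp at ht)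
      have := hLc a ha
      have := hL.1 a ha
      omega
    · have := hF.sum_lt hn hL (M := c - n) fun a ha => by have := hLc a ha; omega
      rw [show c + 1 - n = c - n + 1 by omega]
      exact (List.mem_range.1 ht).trans this

theorem sum_mul_count_map_range_sum (hW : IsLimitWord n S W) (hS : IsNString n S)
    (hF : IsGenFibonacci n F) (hn : 0 < n) (k : ℕ) {L : List ℕ} (hL : IsDecomposition n L) :
    ∑ i ∈ Icc 1 n, F (k + i) * ((List.range (L.map F).sum).map W).count i =
      (L.map fun c => F (k + c)).sum := by
  rw [hW.map_range_sum hS hF hn hL, hS.sum_mul_count_flatten hF hn k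
    fun c hc => hn.trans_le (hL.1 c (List.mem_reverse.1 hc)), List.map_reverse, List.sum_reverse]

end IsLimitWord

/-- Let `k ≥ n ≥ 3`.  `F` is the generalized Fibonacci sequence, `S` the
`n`-string sequence, `W = S_∞` the infinite `n`-string, and
`N_{a_i}(m) = ((List.range m).map W).count i`.  The set `Z_n(k)` of positive
integers whose `n`-decomposition contains the summand `F k` equals
`{ j + F k + Σ_{i=1}^n F (k+i) · N_{a_i}(m) : 0 ≤ j ≤ F (k-(n-1)) - 1, m ≥ 0 }`. -/
theorem fixed_summand_set (n k : ℕ) (hn : 3 ≤ n) (hk : n ≤ k) (F : ℕ → ℕ)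
    (hF1 : ∀ i, 1 ≤ i → i ≤ n → F i = 1)
    (hFrec : ∀ m, n ≤ m → F (m + 1) = F m + F (m + 1 - n))
    (S : ℕ → List ℕ)
    (hS1 : ∀ i, 1 ≤ i → i ≤ n → S i = [i])
    (hSrec : ∀ m, n ≤ m → S (m + 1) = S m ++ S (m + 1 - n))
    (W : ℕ → ℕ)
    (hW : ∀ m, n ≤ m → S m = (List.range (S m).length).map W) :
    {x : ℕ | 0 < x ∧ ∃ L : List ℕ, (∀ c ∈ L, n ≤ c) ∧
        L.Chain' (fun a b => a + n ≤ b) ∧ (L.map F).sum = x ∧ k ∈ L}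
      = {y : ℕ | ∃ j m : ℕ, j + 1 ≤ F (k - (n - 1)) ∧
          y = j + F k + ∑ i ∈ Finset.Icc 1 n,
            F (k + i) * ((List.range m).map W).count i} := by
  have hn₀ : 0 < n := by omega
  have hF : IsGenFibonacci n F := ⟨hF1, hFrec⟩
  have hS : IsNString n S := ⟨hS1, hSrec⟩
  have hW : IsLimitWord n S W := hW
  rw [show k - (n - 1) = k - n + 1 by omega]
  ext x
  constructor
  · rintro ⟨-, L, hpos, hchain, rfl, hkL⟩
    have hL : IsDecomposition n L := isDecomposition_iff_isChain.2 ⟨hpos, hchain⟩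
    obtain ⟨L₁, L₂, rfl⟩ := hL.exists_eq_append_cons_map_add hkL
    obtain ⟨h₁, -, hk₁, h₂⟩ := isDecomposition_append_cons_map_add.1 hL
    refine ⟨(L₁.map F).sum, (L₂.map F).sum,
      hF.sum_lt hn₀ h₁ fun a ha => by have := hk₁ a ha; omega, ?_⟩
    rw [hW.sum_mul_count_map_range_sum hS hF hn₀ k h₂]
    simp [List.map_map, Function.comp_def, add_assoc]
  · rintro ⟨j, m, hj, rfl⟩
    obtain ⟨L₁, h₁, hle₁, rfl⟩ := hF.exists_isDecomposition_le hn₀ hj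
    obtain ⟨L₂, h₂, rfl⟩ := hF.exists_isDecomposition hn₀ m
    have hL := isDecomposition_append_cons_map_add.2
      ⟨h₁, hk, fun a ha => by have := hle₁ a ha; omega, h₂⟩
    obtain ⟨hpos, hchain⟩ := isDecomposition_iff_isChain.1 hL
    refine ⟨by have := hF.pos hn₀ (m := k) (by omega); omega, _, hpos, hchain, ?_, by simp⟩
    rw [hW.sum_mul_count_map_range_sum hS hF hn₀ k h₂]
    simp [List.map_map, Function.comp_def, add_assoc]
end

section
/- Let n ≥ 3 and m ≥ n. The set of positive integers whose n-decomposition uses only summands F_{n,c} with indices c ≤ m is exactly the set of integers from 1 to F_{n,m+1} - 1 inclusive. -/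
/-!
Read the decompositions with indices in decreasing order. If the largest index is `c ≤ M`, the
remaining indices are at most `c - n`, so by induction the sum is below
`F c + F (c - n + 1) = F (c + 1) ≤ F (M + 1)`. Conversely the greedy algorithm decomposes every
`x < F (M + 1)`: if `x < F M` use the indices `≤ M - 1`, otherwise take `F M` and decompose
`x - F M < F (M + 1 - n)` with indices `≤ M - n`.
-/

structure IsGenFib (n : ℕ) (F : ℕ → ℕ) : Prop where
  eq_one : ∀ i, 1 ≤ i → i ≤ n → F i = 1
  add_one_eq : ∀ m, n ≤ m → F (m + 1) = F m + F (m + 1 - n)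

namespace IsGenFib

variable {n : ℕ} {F : ℕ → ℕ}

theorem monotoneOn (hF : IsGenFib n F) : MonotoneOn F (Set.Ici 1) := by
  refine monotoneOn_of_le_add_one Set.ordConnected_Ici fun i _ (hi : 1 ≤ i) _ => ?_
  rcases lt_or_ge i n with h | h
  · rw [hF.eq_one i hi h.le, hF.eq_one (i + 1) (by omega) h]
  · rw [hF.add_one_eq i h]
    exact Nat.le_add_right _ _

theorem pos (hF : IsGenFib n F) (hn : 1 ≤ n) {i : ℕ} (hi : 1 ≤ i) : 0 < F i :=
  (hF.eq_one 1 le_rfl hn).symm.trans_le (hF.monotoneOn (Set.mem_Ici.2 le_rfl) hi hi)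

theorem sum_lt_of_pairwise (hF : IsGenFib n F) (hn : 1 ≤ n) {L : List ℕ}
    (hL : L.Pairwise (fun a b => b + n ≤ a)) (hLn : ∀ c ∈ L, n ≤ c) {M : ℕ}
    (hLM : ∀ c ∈ L, c ≤ M) : (L.map F).sum < F (M + 1) := by
  induction L generalizing M with
  | nil => simpa using hF.pos hn M.succ_pos
  | cons c L ih =>
    rw [List.pairwise_cons] at hL
    have hcn : n ≤ c := hLn c List.mem_cons_self
    have hcM : c ≤ M := hLM c List.mem_cons_self
    have hL_lt : (L.map F).sum < F (c + 1 - n) := by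
      rw [show c + 1 - n = c - n + 1 by omega]
      exact ih hL.2 (fun d hd => hLn d (List.mem_cons_of_mem c hd))
        (fun d hd => by have := hL.1 d hd; omega)
    calc (List.map F (c :: L)).sum = F c + (L.map F).sum := List.sum_cons
      _ < F c + F (c + 1 - n) := by omega
      _ = F (c + 1) := (hF.add_one_eq c hcn).symm
      _ ≤ F (M + 1) := hF.monotoneOn (by simp) (by simp) (by omega)

theorem exists_pairwise_sum_eq (hF : IsGenFib n F) (hn : 1 ≤ n) (M : ℕ) {x : ℕ}
    (hx : x < F (M + 1)) : ∃ L : List ℕ, L.Pairwise (fun a b => b + n ≤ a) ∧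
      (∀ c ∈ L, n ≤ c) ∧ (∀ c ∈ L, c ≤ M) ∧ (L.map F).sum = x := by
  induction M using Nat.strong_induction_on generalizing x with
  | _ M ih =>
    rcases lt_or_ge M n with hMn | hMn
    · rw [hF.eq_one (M + 1) (by omega) hMn, Nat.lt_one_iff] at hx
      exact ⟨[], by simp [hx]⟩
    rcases lt_or_ge x (F M) with hxM | hxM
    · obtain ⟨L, hL, hLn, hLM, hsum⟩ := ih (M - 1) (by omega) (x := x)
        (by rwa [Nat.sub_add_cancel (by omega)])
      exact ⟨L, hL, hLn, fun c hc => (hLM c hc).trans (Nat.sub_le M 1), hsum⟩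
    · obtain ⟨L, hL, hLn, hLM, hsum⟩ := ih (M - n) (by omega) (x := x - F M)
        (by rw [show M - n + 1 = M + 1 - n by omega]; have := hF.add_one_eq M hMn; omega)
      refine ⟨M :: L, List.pairwise_cons.2 ⟨fun c hc => ?_, hL⟩, ?_, ?_, ?_⟩
      · have := hLM c hc; omega
      · simpa [hMn] using hLn
      · simpa using fun c hc => (hLM c hc).trans (Nat.sub_le M n)
      · rw [List.map_cons, List.sum_cons, hsum]; omega

end IsGenFib

theorem isChain_add_le_iff_pairwise_reverse {n : ℕ} {L : List ℕ} :
    L.IsChain (fun a b => a + n ≤ b) ↔ L.reverse.Pairwise (fun a b => b + n ≤ a) := by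
  have : Trans (fun a b : ℕ => a + n ≤ b) (fun a b => a + n ≤ b) (fun a b => a + n ≤ b) :=
    ⟨fun h₁ h₂ => by omega⟩
  rw [List.pairwise_reverse, List.isChain_iff_pairwise]

theorem small_index_decompositions_general (n : ℕ) (hn : 3 ≤ n) (F : ℕ → ℕ)
    (hF1 : ∀ i, 1 ≤ i → i ≤ n → F i = 1)
    (hFrec : ∀ m, n ≤ m → F (m + 1) = F m + F (m + 1 - n))
    (m : ℕ) :
    {x : ℕ | 0 < x ∧ ∃ L : List ℕ, (∀ c ∈ L, n ≤ c) ∧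
        L.Chain' (fun a b => a + n ≤ b) ∧ (L.map F).sum = x ∧ ∀ c ∈ L, c ≤ m}
      = Set.Icc 1 (F (m + 1) - 1) := by
  have hF : IsGenFib n F := ⟨hF1, hFrec⟩
  have hn1 : 1 ≤ n := by omega
  ext x
  rw [Set.mem_Icc, Nat.le_sub_one_iff_lt (hF.pos hn1 m.succ_pos)]
  constructor
  · rintro ⟨hx, L, hLn, hL, rfl, hLm⟩
    refine ⟨hx, ?_⟩
    rw [← List.sum_reverse, ← List.map_reverse]
    exact hF.sum_lt_of_pairwise hn1 (isChain_add_le_iff_pairwise_reverse.1 hL)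
      (by simpa using hLn) (by simpa using hLm)
  · rintro ⟨hx, hxm⟩
    obtain ⟨L, hL, hLn, hLm, rfl⟩ := hF.exists_pairwise_sum_eq hn1 m hxm
    refine ⟨hx, L.reverse, by simpa using hLn, ?_, by simp, by simpa using hLm⟩
    exact isChain_add_le_iff_pairwise_reverse.2 (by rwa [List.reverse_reverse])

/-- Let `n ≥ 3` and `m ≥ n`.  The set of positive integers whose
`n`-decomposition uses only summands `F c` with indices `c ≤ m` is exactly
`{1, 2, …, F (m+1) - 1}`. -/
theorem small_index_decompositions (n : ℕ) (hn : 3 ≤ n) (F : ℕ → ℕ)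
    (hF1 : ∀ i, 1 ≤ i → i ≤ n → F i = 1)
    (hFrec : ∀ m, n ≤ m → F (m + 1) = F m + F (m + 1 - n))
    (m : ℕ) (hm : n ≤ m) :
    {x : ℕ | 0 < x ∧ ∃ L : List ℕ, (∀ c ∈ L, n ≤ c) ∧
        L.Chain' (fun a b => a + n ≤ b) ∧ (L.map F).sum = x ∧ ∀ c ∈ L, c ≤ m}
      = Set.Icc 1 (F (m + 1) - 1) :=
  small_index_decompositions_general n hn F hF1 hFrec m
end
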